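/- arXiv:0906.3471 — 2 statements merged into one kernel-verified Lean document; each statement's English description precedes it below -/
import Mathlib

section
/- For a modular datum, for all i ∈ I we have ξ_i(b_A) = n/n_i², where b_A = Σ_{j∈I} b_j b_{j*} in the fusion ring. In particular ξ_i(b_A) ≠ 0. -/
open Finset

/-- A modular datum over a field `K` of characteristic zero: a finite index set `I` with a
distinguished element `o`, an involution `star` fixing `o`, a symmetric Verlinde matrix `S`
with nonzero first column, a diagonal Dehn matrix with entries `T i` of finite order
satisfying `T (star i) = T i`, such that `S² = n·C` for a nonzero global dimension `n`
(where `C = (δ_{i,j*})`), the matrices `T⁻¹ST⁻¹` and `STS` are proportional, and the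
Verlinde numbers `N_{ij}^k` are nonnegative integers. -/
structure ModularDatum (K : Type*) [Field K] [CharZero K]
    (I : Type*) [Fintype I] [DecidableEq I] where
  o : I
  star : I → I
  S : Matrix I I K
  T : I → K
  n : K
  star_involutive : Function.Involutive star
  star_o : star o = o
  S_symm : ∀ i j, S i j = S j i
  S_io_ne : ∀ i, S i o ≠ 0
  T_star : ∀ i, T (star i) = T i
  T_order : ∃ N : ℕ, 0 < N ∧ ∀ i, T i ^ N = 1
  n_ne : n ≠ 0
  S_sq : ∀ i k, (∑ j, S i j * S j k) = n * (if i = star k then 1 else 0)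
  proportional : ∃ c : K, ∀ i j,
    (T i)⁻¹ * S i j * (T j)⁻¹ = c * ∑ k, S i k * T k * S k j
  verlinde : ∀ i j k, ∃ m : ℕ,
    (1 / n) * ∑ l, S i l * S j l * S (star k) l / S o l = (m : K)

namespace ModularDatum

variable {K : Type*} [Field K] [CharZero K] {I : Type*} [Fintype I] [DecidableEq I]
variable (d : ModularDatum K I)

/-- The `i`-th dimension `n_i = s_{io}`. -/
def ni (i : I) : K := d.S i d.o

/-- The Gaussian sum `g = Σ_i n_i² t_i`. -/
def gauss : K := ∑ i, d.ni i ^ 2 * d.T i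

/-- The reciprocal Gaussian sum `g' = Σ_i n_i² / t_i`. -/
def gauss' : K := ∑ i, d.ni i ^ 2 * (d.T i)⁻¹

/-- The Verlinde numbers `N_{ij}^k = (1/n) Σ_l s_{il} s_{jl} s_{k*l} / s_{ol}`. -/
def Nc (i j k : I) : K := (1 / d.n) * ∑ l, d.S i l * d.S j l * d.S (d.star k) l / d.S d.o l

end ModularDatum

/-! From `S² = nC` one gets `s_{i*j} = s_{ij*}` and the orthogonality
`Σ_k s_{k*l} s_{ki} = n δ_{li}`. Orthogonality turns the definition of `N_{ab}^k` into the
Verlinde formula `Σ_k N_{ab}^k ξ_i(b_k) = ξ_i(b_a) ξ_i(b_b)`, so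
`ξ_i(b_A) = Σ_j s_{ji} s_{j*i} / n_i²`, and that sum is `n` by orthogonality again. -/

namespace ModularDatum

variable {K : Type*} [Field K] [CharZero K] {I : Type*} [Fintype I] [DecidableEq I]
  (d : ModularDatum K I)

theorem S_star_left (i j : I) : d.S (d.star i) j = d.S i (d.star j) := by
  -- compute `S³` both as `(S²)S` and as `S(S²)`, with `S² = nC`
  have h := congrFun (congrFun (Matrix.mul_assoc d.S d.S d.S) i) j
  simp only [Matrix.mul_apply, d.S_sq, mul_ite, ite_mul, mul_one, mul_zero, zero_mul,
    eq_comm (a := i), d.star_involutive.eq_iff, sum_ite_eq', mem_univ, if_true] at h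
  exact mul_left_cancel₀ d.n_ne (by simpa only [mul_comm] using h)

theorem sum_S_star_mul_S (l i : I) :
    ∑ k, d.S (d.star k) l * d.S k i = if l = i then d.n else 0 := by
  have h k : d.S (d.star k) l = d.S (d.star l) k := by rw [S_star_left, S_symm]
  simp only [h, d.S_sq, d.star_involutive.injective.eq_iff, mul_ite, mul_one, mul_zero]

theorem sum_S_mul_S_star (i : I) : ∑ j, d.S j i * d.S (d.star j) i = d.n := by
  simpa only [mul_comm, if_pos, if_true] using d.sum_S_star_mul_S i i

theorem sum_Nc_mul_S (a b i : I) :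
    ∑ k, d.Nc a b k * d.S k i = d.S a i * d.S b i / d.ni i := by
  have hn : d.n ≠ 0 := d.n_ne
  calc ∑ k, d.Nc a b k * d.S k i
      = d.n⁻¹ * ∑ l, d.S a l * d.S b l / d.S d.o l * ∑ k, d.S (d.star k) l * d.S k i := by
        simp only [Nc, one_div, mul_sum, sum_mul]
        rw [sum_comm]
        exact sum_congr rfl fun l _ => sum_congr rfl fun k _ => by ring
    _ = d.S a i * d.S b i / d.ni i := by
        simp only [sum_S_star_mul_S, mul_ite, mul_zero, sum_ite_eq', mem_univ, if_true,
          d.S_symm d.o, ni]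
        field_simp

end ModularDatum

/-- For a modular datum, `ξ_i(b_A) = n/n_i²`, where `b_A = Σ_j b_j b_{j*}` in the fusion
ring, so that `ξ_i(b_A) = Σ_j Σ_k N_{j,j*}^k ξ_i(b_k)`. In particular `ξ_i(b_A) ≠ 0`. -/
theorem ModularDatum.xi_bA {K : Type*} [Field K] [CharZero K]
    {I : Type*} [Fintype I] [DecidableEq I] (d : ModularDatum K I) (i : I) :
    (∑ j, ∑ k, d.Nc j (d.star j) k * (d.S k i / d.ni i)) = d.n / d.ni i ^ 2 ∧
    (∑ j, ∑ k, d.Nc j (d.star j) k * (d.S k i / d.ni i)) ≠ 0 := by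
  have h : ∑ j, ∑ k, d.Nc j (d.star j) k * (d.S k i / d.ni i) = d.n / d.ni i ^ 2 :=
    calc ∑ j, ∑ k, d.Nc j (d.star j) k * (d.S k i / d.ni i)
        = ∑ j, d.S j i * d.S (d.star j) i / d.ni i ^ 2 := by
          refine sum_congr rfl fun j _ => ?_
          simp only [← mul_div_assoc, ← sum_div, d.sum_Nc_mul_S, div_div, sq]
      _ = d.n / d.ni i ^ 2 := by rw [← sum_div, d.sum_S_mul_S_star]
  exact ⟨h, h ▸ div_ne_zero d.n_ne (pow_ne_zero 2 (d.S_io_ne i))⟩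
end

section
/- For a modular datum with index set I of cardinality m, exponent N (the order of T), Gaussian sum g and reciprocal Gaussian sum g', we have g^{2Nm} = g'^{2Nm}. -/
/-!
Read at the entry `(o, o)`, the proportionality `T⁻¹ S T⁻¹ = c • S T S` gives `s_oo = c g t_o²`;
multiplying its `o`-th column by the `o`-th row of `S` and using `S² = n C` gives
`g' = c n t_o² s_oo`, hence `g' = (c² n) t_o⁴ g`. Taking determinants of the same identity gives
`det S = c^m (det S)² (∏ t_i)³`, and since `C` is a permutation matrix, `(det S)⁴ = n^(2m)`; raising
to the power `4N` kills `∏ t_i` and leaves `(c² n)^(2Nm) = 1`. As `t_o^N = 1` too, the factor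
`(c² n) t_o⁴` disappears from `g'^(2Nm)`.
-/

open Finset

theorem sq_mul_pow_eq_one_of_eq_mul_sq {F : Type*} [Field F] {x a p y : F} {N : ℕ}
    (hx : x = a * x ^ 2 * p ^ 3) (hx4 : x ^ 4 = y ^ 2) (hy : y ≠ 0) (hp : p ^ N = 1) :
    (a ^ 2 * y) ^ (2 * N) = 1 := by
  have hy4 : y ^ 2 = a ^ 4 * y ^ 4 * p ^ 12 :=
    calc y ^ 2 = x ^ 4 := hx4.symm
      _ = (a * x ^ 2 * p ^ 3) ^ 4 := by rw [← hx]
      _ = a ^ 4 * (x ^ 4) ^ 2 * p ^ 12 := by ring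
      _ = a ^ 4 * y ^ 4 * p ^ 12 := by rw [hx4]; ring
  have h1 : (a ^ 2 * y) ^ 2 * p ^ 12 = 1 :=
    mul_right_cancel₀ (pow_ne_zero 2 hy) (by linear_combination -hy4)
  calc (a ^ 2 * y) ^ (2 * N) = ((a ^ 2 * y) ^ 2) ^ N * (p ^ N) ^ 12 := by
        rw [hp, one_pow, mul_one, pow_mul]
    _ = ((a ^ 2 * y) ^ 2 * p ^ 12) ^ N := by ring
    _ = 1 := by rw [h1, one_pow]

namespace ModularDatum

variable {K : Type*} [Field K] [CharZero K] {I : Type*} [Fintype I] [DecidableEq I]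
variable (d : ModularDatum K I)

theorem T_ne_zero (i : I) : d.T i ≠ 0 := by
  obtain ⟨N, hN, hT⟩ := d.T_order
  intro h
  simpa [h, zero_pow hN.ne'] using hT i

def starPerm : Equiv.Perm I := Function.Involutive.toPerm d.star d.star_involutive

theorem star_eq_iff_eq_star {i k : I} : d.star i = k ↔ i = d.star k :=
  ⟨fun h => h ▸ (d.star_involutive i).symm, fun h => h ▸ d.star_involutive k⟩

theorem S_mul_S : d.S * d.S = d.n • d.starPerm.permMatrix K := by
  ext i k
  simp [Matrix.mul_apply, d.S_sq, PEquiv.toMatrix_apply, starPerm, d.star_eq_iff_eq_star]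

theorem det_S_pow_four : d.S.det ^ 4 = (d.n ^ Fintype.card I) ^ 2 := by
  have h := congrArg Matrix.det d.S_mul_S
  rw [Matrix.det_mul, Matrix.det_smul, Matrix.det_permutation] at h
  rw [show d.S.det ^ 4 = (d.S.det * d.S.det) ^ 2 by ring, h, mul_pow,
    ← Int.cast_pow, ← Units.val_pow_eq_pow_val, Int.units_sq]
  simp

theorem sum_S_o_mul_S (k : I) : ∑ i, d.S d.o i * d.S i k = if k = d.o then d.n else 0 := by
  simp only [d.S_sq, ← d.star_eq_iff_eq_star, d.star_o, eq_comm (a := d.o), mul_ite, mul_one,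
    mul_zero]

noncomputable def proportionalityConstant : K := d.proportional.choose

local notation "c" => d.proportionalityConstant

theorem inv_T_mul_S_mul_inv_T (i j : I) :
    (d.T i)⁻¹ * d.S i j * (d.T j)⁻¹ = c * ∑ k, d.S i k * d.T k * d.S k j :=
  d.proportional.choose_spec i j

theorem S_o_o_eq_mul_gauss : d.S d.o d.o = c * d.gauss * d.T d.o ^ 2 := by
  have h := d.inv_T_mul_S_mul_inv_T d.o d.o
  have hsum : ∑ k, d.S d.o k * d.T k * d.S k d.o = d.gauss :=
    Finset.sum_congr rfl fun k _ => by rw [ni, d.S_symm d.o k]; ring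
  rw [hsum] at h
  have := d.T_ne_zero d.o
  field_simp at h
  linear_combination h

theorem ni_sq_mul_inv_T (i : I) :
    d.ni i ^ 2 * (d.T i)⁻¹ = c * d.T d.o * ∑ k, d.S d.o i * d.S i k * d.T k * d.ni k := by
  have := d.T_ne_zero d.o
  calc d.ni i ^ 2 * (d.T i)⁻¹
      = d.T d.o * d.S d.o i * ((d.T i)⁻¹ * d.S i d.o * (d.T d.o)⁻¹) := by
        rw [ni, d.S_symm d.o i]; field_simp
    _ = _ := by
        rw [d.inv_T_mul_S_mul_inv_T, Finset.mul_sum, Finset.mul_sum, Finset.mul_sum]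
        exact Finset.sum_congr rfl fun k _ => by rw [ni]; ring

theorem gauss'_eq_mul_S_o_o : d.gauss' = c * d.n * d.T d.o ^ 2 * d.S d.o d.o := by
  calc d.gauss' = c * d.T d.o * ∑ k, (∑ i, d.S d.o i * d.S i k) * d.T k * d.ni k := by
        simp only [gauss', ni_sq_mul_inv_T, ← Finset.mul_sum, Finset.sum_mul]
        rw [Finset.sum_comm]
    _ = _ := by
        simp only [sum_S_o_mul_S, ite_mul, zero_mul, Finset.sum_ite_eq', Finset.mem_univ, if_true]
        rw [ni]; ring

theorem gauss'_eq_mul_gauss : d.gauss' = c ^ 2 * d.n * d.T d.o ^ 4 * d.gauss := by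
  rw [gauss'_eq_mul_S_o_o, S_o_o_eq_mul_gauss]; ring

theorem det_S_eq_mul_det_S_sq :
    d.S.det = c ^ Fintype.card I * d.S.det ^ 2 * (∏ i, d.T i) ^ 3 := by
  have hmat : Matrix.diagonal (fun i => (d.T i)⁻¹) * d.S * Matrix.diagonal (fun i => (d.T i)⁻¹)
      = c • (d.S * Matrix.diagonal d.T * d.S) := by
    ext i j
    rw [Matrix.smul_apply, Matrix.mul_diagonal, Matrix.diagonal_mul, smul_eq_mul, Matrix.mul_apply]
    simp only [Matrix.mul_diagonal]
    exact d.inv_T_mul_S_mul_inv_T i j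
  have h := congrArg Matrix.det hmat
  simp only [Matrix.det_mul, Matrix.det_diagonal, Matrix.det_smul, Finset.prod_inv_distrib] at h
  have hP : ∏ i, d.T i ≠ 0 := Finset.prod_ne_zero_iff.2 fun i _ => d.T_ne_zero i
  field_simp at h
  linear_combination h

theorem proportionalityConstant_sq_mul_n_pow_eq_one {N : ℕ} (hT : ∀ i, d.T i ^ N = 1) :
    (c ^ 2 * d.n) ^ (2 * N * Fintype.card I) = 1 := by
  have hP : (∏ i, d.T i) ^ N = 1 := by
    rw [← Finset.prod_pow]; exact Finset.prod_eq_one fun i _ => hT i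
  have h := sq_mul_pow_eq_one_of_eq_mul_sq d.det_S_eq_mul_det_S_sq d.det_S_pow_four
    (pow_ne_zero _ d.n_ne) hP
  rw [← h]; ring

end ModularDatum

theorem ModularDatum.gauss_pow_eq_general {K : Type*} [Field K] [CharZero K]
    {I : Type*} [Fintype I] [DecidableEq I] (d : ModularDatum K I)
    (N : ℕ) (hT : ∀ i, d.T i ^ N = 1) :
    d.gauss ^ (2 * N * Fintype.card I) = d.gauss' ^ (2 * N * Fintype.card I) := by
  have hTo : (d.T d.o ^ 4) ^ (2 * N * Fintype.card I) = 1 := by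
    rw [← pow_mul, show 4 * (2 * N * Fintype.card I) = N * (8 * Fintype.card I) by ring, pow_mul,
      hT, one_pow]
  rw [d.gauss'_eq_mul_gauss, mul_pow, mul_pow, d.proportionalityConstant_sq_mul_n_pow_eq_one hT,
    hTo, one_mul, one_mul]

/-- For a modular datum with `m` simple objects and exponent `N` (so `T^N = E`), the
Gaussian sum and its reciprocal satisfy `g^(2Nm) = g'^(2Nm)`. -/
theorem ModularDatum.gauss_pow_eq {K : Type*} [Field K] [CharZero K]
    {I : Type*} [Fintype I] [DecidableEq I] (d : ModularDatum K I)
    (N : ℕ) (hN : 0 < N) (hT : ∀ i, d.T i ^ N = 1) :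
    d.gauss ^ (2 * N * Fintype.card I) = d.gauss' ^ (2 * N * Fintype.card I) :=
  ModularDatum.gauss_pow_eq_general d N hT
end
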